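/- arXiv:2508.15602 — 2 statements merged into one kernel-verified Lean document; each statement's English description precedes it below -/
import Mathlib

section
/- Let G be a Birkhoff–von Neumann matching-covered graph. Then the integer lattice L(G) generated by the incidence vectors of perfect matchings of G equals lin(P(G)) ∩ ℤ^E; that is, every integral vector in the linear span of the perfect matchings is an integer linear combination of perfect matchings. -/
/-!
An integral vector `x` in the linear hull of the perfect matchings becomes nonnegative after adding
a large multiple of the sum of all perfect matchings; the result `y` is integral, vanishes off the
edges, and has the same degree `m` at every vertex. For a Birkhoff–von Neumann graph `y / m` then
lies in `P(G)`, so some perfect matching `M` is contained in the support of `y`; integrality gives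
`χ^M ≤ y`, and `y - χ^M` has degree `m - 1`. Induction on `m` writes `y`, hence `x`, as an integer
combination of perfect matchings.
-/

open Classical Finset

noncomputable section

namespace PaperPM

variable {V : Type} [Fintype V] [DecidableEq V]

/-- `M` is (the edge set of) a perfect matching of `G`. -/
def IsPM (G : SimpleGraph V) (M : Finset (Sym2 V)) : Prop :=
  (M : Set (Sym2 V)) ⊆ G.edgeSet ∧ ∀ v : V, ∃! e, e ∈ M ∧ v ∈ e

/-- `G` is matching-covered: every edge lies in a perfect matching. -/
def MatchingCovered (G : SimpleGraph V) : Prop :=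
  ∀ e ∈ G.edgeSet, ∃ M, IsPM G M ∧ e ∈ M

/-- incidence (indicator) vector of a set of edges -/
def indVec (M : Finset (Sym2 V)) : Sym2 V → ℝ := fun e => if e ∈ M then 1 else 0

/-- the perfect matching polytope of `G` -/
def pmPolytope (G : SimpleGraph V) : Set (Sym2 V → ℝ) :=
  convexHull ℝ {x | ∃ M, IsPM G M ∧ x = indVec M}

/-- the cut `δ(X)`: edges of `G` with exactly one endpoint in `X` -/
def cutE (G : SimpleGraph V) (X : Set V) : Finset (Sym2 V) :=
  Finset.univ.filter fun e =>
    e ∈ G.edgeSet ∧ ∃ u v : V, e = s(u, v) ∧ u ∈ X ∧ v ∉ X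

/-- `x(A) = Σ_{a ∈ A} x_a` -/
def edgeSum (x : Sym2 V → ℝ) (A : Finset (Sym2 V)) : ℝ := ∑ e ∈ A, x e

/-- the face `P(G;C) = P(G) ∩ {x : x(δ(X)) = 1}` -/
def faceCut (G : SimpleGraph V) (X : Set V) : Set (Sym2 V → ℝ) :=
  {x ∈ pmPolytope G | edgeSum x (cutE G X) = 1}

/-- `δ(X)` is a tight cut -/
def TightCut (G : SimpleGraph V) (X : Set V) : Prop :=
  Odd X.toFinset.card ∧ 1 < X.toFinset.card ∧ X.toFinset.card < Fintype.card V - 1 ∧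
    ∀ M, IsPM G M → (M ∩ cutE G X).card = 1

/-- a brick: non-bipartite matching-covered graph without tight cuts -/
def IsBrick (G : SimpleGraph V) : Prop :=
  MatchingCovered G ∧ ¬ G.Colorable 2 ∧ ∀ X : Set V, ¬ TightCut G X

/-- dimension of a subset of `ℝ^{Sym2 V}` (affine dimension; `-1` for the empty set) -/
def polyDim (s : Set (Sym2 V → ℝ)) : ℤ :=
  if s = ∅ then -1 else (Module.finrank ℝ (vectorSpan ℝ s) : ℤ)

/-- number of bricks in a tight cut decomposition of `G`, via the dimension
formula `dim P(G) = |E| − |V| + 1 − b(G)` of Naddef and Edmonds–Pulleyblank–Lovász. -/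
def brickCount (G : SimpleGraph V) : ℤ :=
  (G.edgeFinset.card : ℤ) - Fintype.card V + 1 - polyDim (pmPolytope G)

/-- (the edge set of) a perfect matching of the contraction `G/X`, viewed inside `G`:
no edge inside `X`, exactly one cut edge (covering the contraction vertex), and every
vertex outside `X` covered exactly once. This keeps multiple parallel cut edges distinct. -/
def IsPMContr (G : SimpleGraph V) (X : Set V) (M : Finset (Sym2 V)) : Prop :=
  (M : Set (Sym2 V)) ⊆ G.edgeSet ∧ (∀ e ∈ M, ¬ ∀ v ∈ e, v ∈ X) ∧
    (M ∩ cutE G X).card = 1 ∧ ∀ v : V, v ∉ X → ∃! e, e ∈ M ∧ v ∈ e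

/-- the contraction `G/X` is matching-covered (every one of its edges, i.e. every
edge of `G` not inside `X`, lies in a perfect matching of `G/X`). -/
def MatchingCoveredContr (G : SimpleGraph V) (X : Set V) : Prop :=
  ∀ e ∈ G.edgeSet, (¬ ∀ v ∈ e, v ∈ X) → ∃ M, IsPMContr G X M ∧ e ∈ M

/-- `δ(X)` is a separating cut: odd, nontrivial, and both cut-contractions
`G/X` and `G/X̄` are matching-covered. -/
def SeparatingCut (G : SimpleGraph V) (X : Set V) : Prop :=
  Odd X.toFinset.card ∧ 1 < X.toFinset.card ∧ X.toFinset.card < Fintype.card V - 1 ∧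
    MatchingCoveredContr G X ∧ MatchingCoveredContr G Xᶜ

/-- the edges of the contraction `G/X`, as edges of `G` -/
def contrEdges (G : SimpleGraph V) (X : Set V) : Finset (Sym2 V) :=
  G.edgeFinset.filter fun e => ¬ ∀ v ∈ e, v ∈ X

/-- the perfect matching polytope of the contraction `G/X`, in the coordinates of `G` -/
def contrPolytope (G : SimpleGraph V) (X : Set V) : Set (Sym2 V → ℝ) :=
  convexHull ℝ {x | ∃ M, IsPMContr G X M ∧ x = indVec M}

/-- number of bricks of the contraction `G/X`, via the dimension formula -/
def brickCountContr (G : SimpleGraph V) (X : Set V) : ℤ :=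
  (contrEdges G X).card - ((Fintype.card V - X.toFinset.card : ℕ) + 1) + 1 -
    polyDim (contrPolytope G X)

/-- the contraction `G/X` is a Birkhoff–von Neumann graph: its perfect matching
polytope is cut out by nonnegativity, the degree equations, and `x(δ(X)) = 1`. -/
def BvNContr (G : SimpleGraph V) (X : Set V) : Prop :=
  contrPolytope G X =
    {x | (∀ e, 0 ≤ x e) ∧ (∀ e : Sym2 V, (e ∉ G.edgeSet ∨ ∀ v ∈ e, v ∈ X) → x e = 0) ∧
      (∀ v : V, v ∉ X → edgeSum x (cutE G {v}) = 1) ∧ edgeSum x (cutE G X) = 1}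

/-- the contraction `G/X` is bipartite -/
def ContrBipartite (G : SimpleGraph V) (X : Set V) : Prop :=
  ∃ (c : V → Bool) (b : Bool), ∀ u v : V, G.Adj u v → (u ∉ X ∨ v ∉ X) →
    (if u ∈ X then b else c u) ≠ (if v ∈ X then b else c v)

/-- `G` is a Birkhoff–von Neumann graph -/
def BvN (G : SimpleGraph V) : Prop :=
  pmPolytope G =
    {x | (∀ e, 0 ≤ x e) ∧ (∀ e : Sym2 V, e ∉ G.edgeSet → x e = 0) ∧
      ∀ v : V, edgeSum x (cutE G {v}) = 1}

/-- `F` is a face of the convex set `P` -/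
def IsFaceOf {E : Type*} [AddCommGroup E] [Module ℝ E] (P F : Set E) : Prop :=
  F ⊆ P ∧ Convex ℝ F ∧ ∀ x ∈ P, ∀ y ∈ P, ∀ t : ℝ, 0 < t → t < 1 →
    t • x + (1 - t) • y ∈ F → x ∈ F ∧ y ∈ F

/-- a vector is integral if all its coordinates are integers -/
def Integral (x : Sym2 V → ℝ) : Prop := ∀ e, ∃ n : ℤ, x e = (n : ℝ)

/-- the Petersen graph, as the Kneser graph `K(5,2)` -/
def petersenGraph : SimpleGraph {s : Finset (Fin 5) // s.card = 2} where
  Adj a b := Disjoint (a : Finset (Fin 5)) (b : Finset (Fin 5))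
  symm := ⟨fun _ _ h => h.symm⟩
  loopless := ⟨fun a h => by
    have h0 : (a : Finset (Fin 5)) = ∅ := by
      exact disjoint_self.mp h
    have h2 := a.2
    rw [h0] at h2
    simp at h2⟩


set_option linter.unusedSectionVars false

theorem exists_pos_smul_le_of_mem_convexHull {E : Type*} [AddCommGroup E] [PartialOrder E]
    [IsOrderedAddMonoid E] [Module ℝ E] [PosSMulMono ℝ E] {s : Set E} (hs : ∀ p ∈ s, 0 ≤ p)
    {x : E} (hx : x ∈ convexHull ℝ s) : ∃ p ∈ s, ∃ t : ℝ, 0 < t ∧ t • p ≤ x := by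
  obtain ⟨ι, _, z, w, hzs, -, hw_pos, hw_sum, rfl⟩ := eq_pos_convex_span_of_mem_convexHull hx
  obtain ⟨i⟩ : Nonempty ι := by
    by_contra h
    rw [not_nonempty_iff] at h
    simp at hw_sum
  refine ⟨z i, hzs ⟨i, rfl⟩, w i, hw_pos i, ?_⟩
  exact Finset.single_le_sum (f := fun j => w j • z j)
    (fun j _ => smul_nonneg (hw_pos j).le (hs _ (hzs ⟨j, rfl⟩))) (Finset.mem_univ i)

theorem span_convexHull {E : Type*} [AddCommGroup E] [Module ℝ E] (s : Set E) :
    Submodule.span ℝ (convexHull ℝ s) = Submodule.span ℝ s :=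
  le_antisymm
    (Submodule.span_le.2 (convexHull_min Submodule.subset_span (Submodule.span ℝ s).convex))
    (Submodule.span_mono (subset_convexHull ℝ s))

def edgeSumLinear (A : Finset (Sym2 V)) : (Sym2 V → ℝ) →ₗ[ℝ] ℝ := ∑ e ∈ A, LinearMap.proj e

@[simp]
theorem edgeSumLinear_apply (A : Finset (Sym2 V)) (x : Sym2 V → ℝ) :
    edgeSumLinear A x = edgeSum x A := by
  simp [edgeSumLinear, edgeSum]

theorem edgeSum_sub (x y : Sym2 V → ℝ) (A : Finset (Sym2 V)) :
    edgeSum (x - y) A = edgeSum x A - edgeSum y A := by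
  simp only [← edgeSumLinear_apply, map_sub]

theorem edgeSum_smul (c : ℝ) (x : Sym2 V → ℝ) (A : Finset (Sym2 V)) :
    edgeSum (c • x) A = c * edgeSum x A := by
  simp only [← edgeSumLinear_apply, map_smul, smul_eq_mul]

theorem Integral.add {x y : Sym2 V → ℝ} (hx : Integral x) (hy : Integral y) :
    Integral (x + y) := fun e => by
  obtain ⟨m, hm⟩ := hx e
  obtain ⟨n, hn⟩ := hy e
  exact ⟨m + n, by simp [hm, hn]⟩

theorem Integral.sub {x y : Sym2 V → ℝ} (hx : Integral x) (hy : Integral y) :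
    Integral (x - y) := fun e => by
  obtain ⟨m, hm⟩ := hx e
  obtain ⟨n, hn⟩ := hy e
  exact ⟨m - n, by simp [hm, hn]⟩

theorem Integral.zsmul {x : Sym2 V → ℝ} (hx : Integral x) (c : ℤ) : Integral (c • x) := fun e => by
  obtain ⟨n, hn⟩ := hx e
  exact ⟨c * n, by simp [hn]⟩

theorem Integral.one_le_of_pos {x : Sym2 V → ℝ} (hx : Integral x) {e : Sym2 V} (he : 0 < x e) :
    1 ≤ x e := by
  obtain ⟨n, hn⟩ := hx e
  rw [hn] at he ⊢
  exact_mod_cast (by exact_mod_cast he : (0 : ℤ) < n)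

theorem Integral.exists_edgeSum_eq {x : Sym2 V → ℝ} (hx : Integral x) (A : Finset (Sym2 V)) :
    ∃ n : ℤ, edgeSum x A = n := by
  choose f hf using hx
  exact ⟨∑ e ∈ A, f e, by simp [edgeSum, hf]⟩

theorem integral_indVec (M : Finset (Sym2 V)) : Integral (indVec M) := fun e => by
  by_cases he : e ∈ M
  · exact ⟨1, by simp [indVec, he]⟩
  · exact ⟨0, by simp [indVec, he]⟩

theorem integral_of_mem_span_int_indVec {S : Set (Finset (Sym2 V))} {x : Sym2 V → ℝ}
    (hx : x ∈ Submodule.span ℤ (indVec '' S)) : Integral x := by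
  induction hx using Submodule.span_induction with
  | mem y hy => obtain ⟨M, -, rfl⟩ := hy; exact integral_indVec M
  | zero => exact fun _ => ⟨0, by simp⟩
  | add y z _ _ hy hz => exact hy.add hz
  | smul c y _ hy => exact hy.zsmul c

theorem indVec_nonneg (M : Finset (Sym2 V)) : 0 ≤ indVec M := fun e => by
  unfold indVec; split <;> norm_num

theorem mem_cutE_singleton {G : SimpleGraph V} {v : V} {e : Sym2 V} :
    e ∈ cutE G {v} ↔ e ∈ G.edgeSet ∧ v ∈ e := by
  induction e using Sym2.ind with
  | _ a b =>
    simp only [cutE, Finset.mem_filter, Finset.mem_univ, true_and, Set.mem_singleton_iff]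
    refine ⟨fun ⟨he, u, w, huw, hu, _⟩ => ⟨he, huw ▸ hu ▸ Sym2.mem_mk_left u w⟩, ?_⟩
    rintro ⟨he, hv⟩
    have hab : a ≠ b := G.mem_edgeSet.mp he |>.ne
    refine ⟨he, ?_⟩
    rcases Sym2.mem_iff.mp hv with rfl | rfl
    · exact ⟨v, b, rfl, rfl, fun h => hab h.symm⟩
    · exact ⟨v, a, Sym2.eq_swap, rfl, hab⟩

theorem IsPM.edgeSum_indVec_cutE_singleton {G : SimpleGraph V} {M : Finset (Sym2 V)}
    (hM : IsPM G M) (v : V) : edgeSum (indVec M) (cutE G {v}) = 1 := by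
  obtain ⟨e₀, he₀, huniq⟩ := hM.2 v
  have hfilter : (cutE G {v}).filter (· ∈ M) = {e₀} := by
    ext e
    simp only [Finset.mem_filter, Finset.mem_singleton, mem_cutE_singleton]
    exact ⟨fun ⟨⟨_, hv⟩, hm⟩ => huniq e ⟨hm, hv⟩, by rintro rfl; exact ⟨⟨hM.1 he₀.1, he₀.2⟩, he₀.1⟩⟩
  unfold edgeSum indVec
  rw [Finset.sum_boole, hfilter, Finset.card_singleton, Nat.cast_one]

theorem span_pmPolytope (G : SimpleGraph V) :
    Submodule.span ℝ (pmPolytope G) = Submodule.span ℝ (indVec '' {M | IsPM G M}) := by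
  rw [pmPolytope, span_convexHull]
  congr 1
  ext x
  simp [eq_comm]

theorem edgeSum_cutE_singleton_eq_of_mem_span {G : SimpleGraph V} {x : Sym2 V → ℝ}
    (hx : x ∈ Submodule.span ℝ (indVec '' {M | IsPM G M})) (v w : V) :
    edgeSum x (cutE G {v}) = edgeSum x (cutE G {w}) := by
  simpa using LinearMap.eqOn_span' (f := edgeSumLinear (cutE G {v}))
    (g := edgeSumLinear (cutE G {w}))
    (by rintro _ ⟨M, hM, rfl⟩; simp [hM.edgeSum_indVec_cutE_singleton]) hx

theorem apply_eq_zero_of_mem_span {G : SimpleGraph V} {x : Sym2 V → ℝ}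
    (hx : x ∈ Submodule.span ℝ (indVec '' {M | IsPM G M})) {e : Sym2 V}
    (he : ∀ M, IsPM G M → e ∉ M) : x e = 0 :=
  LinearMap.eqOn_span' (f := LinearMap.proj e) (g := 0)
    (by rintro _ ⟨M, hM, rfl⟩; simp [indVec, he M hM]) hx

section BvN

variable {G : SimpleGraph V} {y : Sym2 V → ℝ}

theorem eq_zero_of_edgeSum_cutE_singleton_eq_zero (hy0 : 0 ≤ y)
    (hoff : ∀ e ∉ G.edgeSet, y e = 0) (hdeg : ∀ v, edgeSum y (cutE G {v}) = 0) : y = 0 := by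
  funext e
  by_cases he : e ∈ G.edgeSet
  · induction e using Sym2.ind with
    | _ a b =>
      exact (Finset.sum_eq_zero_iff_of_nonneg fun f _ => hy0 f).1 (hdeg a) _
        (mem_cutE_singleton.2 ⟨he, Sym2.mem_mk_left a b⟩)
  · exact hoff e he

theorem exists_isPM_support_subset (hBvN : BvN G) (hy0 : 0 ≤ y)
    (hoff : ∀ e ∉ G.edgeSet, y e = 0) {r : ℝ} (hr : 0 < r)
    (hdeg : ∀ v, edgeSum y (cutE G {v}) = r) : ∃ M, IsPM G M ∧ ∀ e ∈ M, 0 < y e := by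
  have hw : r⁻¹ • y ∈ pmPolytope G := by
    rw [hBvN]
    refine ⟨fun e => smul_nonneg (inv_nonneg.2 hr.le) (hy0 e), fun e he => by simp [hoff e he],
      fun v => ?_⟩
    rw [edgeSum_smul, hdeg v, inv_mul_cancel₀ hr.ne']
  obtain ⟨_, ⟨M, hM, rfl⟩, t, ht, hle⟩ :=
    exists_pos_smul_le_of_mem_convexHull (by rintro _ ⟨M, -, rfl⟩; exact indVec_nonneg M) hw
  refine ⟨M, hM, fun e he => ?_⟩
  have : t ≤ r⁻¹ * y e := by simpa [indVec, he] using hle e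
  exact (mul_pos_iff_of_pos_left (inv_pos.2 hr)).1 (ht.trans_le this)

theorem mem_span_int_of_edgeSum_cutE_singleton_eq_natCast (hBvN : BvN G) (m : ℕ) (hy0 : 0 ≤ y)
    (hyint : Integral y) (hoff : ∀ e ∉ G.edgeSet, y e = 0)
    (hdeg : ∀ v, edgeSum y (cutE G {v}) = m) :
    y ∈ Submodule.span ℤ (indVec '' {M | IsPM G M}) := by
  induction m generalizing y with
  | zero =>
    rw [eq_zero_of_edgeSum_cutE_singleton_eq_zero hy0 hoff (by simpa using hdeg)]
    exact zero_mem _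
  | succ m ih =>
    obtain ⟨M, hM, hMy⟩ := exists_isPM_support_subset hBvN hy0 hoff (Nat.cast_add_one_pos m)
      fun v => by rw [hdeg v, Nat.cast_succ]
    have hMle : indVec M ≤ y := fun e => by
      by_cases he : e ∈ M
      · simpa [indVec, he] using hyint.one_le_of_pos (hMy e he)
      · simpa [indVec, he] using hy0 e
    have hrest : y - indVec M ∈ Submodule.span ℤ (indVec '' {M | IsPM G M}) := by
      refine ih (sub_nonneg.2 hMle) (hyint.sub (integral_indVec M)) (fun e he => ?_) (fun v => ?_)
      · have heM : e ∉ M := fun h => he (hM.1 h)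
        simp [hoff e he, indVec, heM]
      · rw [edgeSum_sub, hdeg v, hM.edgeSum_indVec_cutE_singleton]
        push_cast
        ring
    simpa using add_mem hrest (Submodule.subset_span ⟨M, hM, rfl⟩)

theorem mem_span_int_of_edgeSum_cutE_singleton_const (hBvN : BvN G) (hy0 : 0 ≤ y)
    (hyint : Integral y) (hoff : ∀ e ∉ G.edgeSet, y e = 0)
    (hdeg : ∀ v w, edgeSum y (cutE G {v}) = edgeSum y (cutE G {w})) :
    y ∈ Submodule.span ℤ (indVec '' {M | IsPM G M}) := by
  rcases isEmpty_or_nonempty V with hV | ⟨⟨v₀⟩⟩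
  · rw [Subsingleton.elim y 0]
    exact zero_mem _
  obtain ⟨n, hn⟩ := hyint.exists_edgeSum_eq (cutE G {v₀})
  have hn0 : (0 : ℝ) ≤ n := hn ▸ Finset.sum_nonneg fun e _ => hy0 e
  obtain ⟨m, rfl⟩ : ∃ m : ℕ, n = m := Int.eq_ofNat_of_zero_le (by exact_mod_cast hn0)
  exact mem_span_int_of_edgeSum_cutE_singleton_eq_natCast hBvN m hy0 hyint hoff
    fun v => by rw [hdeg v v₀, hn]; rfl

end BvN

theorem mem_span_int_of_mem_span_of_integral {G : SimpleGraph V} (hBvN : BvN G)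
    {x : Sym2 V → ℝ} (hx : x ∈ Submodule.span ℝ (indVec '' {M | IsPM G M})) (hxint : Integral x) :
    x ∈ Submodule.span ℤ (indVec '' {M | IsPM G M}) := by
  set z := ∑ M ∈ Finset.univ.filter (IsPM G), indVec M
  have hz : z ∈ Submodule.span ℤ (indVec '' {M | IsPM G M}) :=
    Submodule.sum_mem _ fun M hM => Submodule.subset_span ⟨M, (Finset.mem_filter.1 hM).2, rfl⟩
  have hz_ge : ∀ M, IsPM G M → indVec M ≤ z := fun M hM =>
    Finset.single_le_sum (fun M _ => indVec_nonneg M) (Finset.mem_filter.2 ⟨Finset.mem_univ M, hM⟩)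
  obtain ⟨b, hb⟩ := Finite.exists_le fun e => -x e
  set y := x + ⌈b⌉₊ • z
  have hNz : ⌈b⌉₊ • z ∈ Submodule.span ℤ (indVec '' {M | IsPM G M}) := nsmul_mem hz _
  have hy : y ∈ Submodule.span ℝ (indVec '' {M | IsPM G M}) :=
    add_mem hx (Submodule.span_le_restrictScalars ℤ ℝ _ hNz)
  have hy0 : 0 ≤ y := fun e => by
    by_cases he : ∃ M, IsPM G M ∧ e ∈ M
    · obtain ⟨M, hM, heM⟩ := he
      have h1 : 1 ≤ z e := by simpa [indVec, heM] using hz_ge M hM e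
      have h2 : -x e ≤ ⌈b⌉₊ := (hb e).trans (Nat.le_ceil b)
      show 0 ≤ x e + ⌈b⌉₊ • z e
      rw [nsmul_eq_mul]
      nlinarith
    · exact (apply_eq_zero_of_mem_span hy fun M hM heM => he ⟨M, hM, heM⟩).ge
  have hxy : x = y - ⌈b⌉₊ • z := by simp [y]
  rw [hxy]
  refine sub_mem ?_ hNz
  exact mem_span_int_of_edgeSum_cutE_singleton_const hBvN hy0
    (hxint.add (integral_of_mem_span_int_indVec hNz))
    (fun e he => apply_eq_zero_of_mem_span hy fun M hM heM => he (hM.1 heM))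
    (edgeSum_cutE_singleton_eq_of_mem_span hy)

theorem stmt16_general (G : SimpleGraph V) (hBvN : BvN G) :
    (Submodule.span ℤ (indVec '' {M | IsPM G M}) : Set (Sym2 V → ℝ)) =
      {x | x ∈ Submodule.span ℝ (pmPolytope G) ∧ Integral x} := by
  rw [span_pmPolytope]
  ext x
  exact ⟨fun hx => ⟨Submodule.span_le_restrictScalars ℤ ℝ _ hx,
      integral_of_mem_span_int_indVec hx⟩,
    fun ⟨hx, hxint⟩ => mem_span_int_of_mem_span_of_integral hBvN hx hxint⟩

/-- for a Birkhoff–von Neumann matching-covered graph `G`, the lattice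
generated by the incidence vectors of perfect matchings equals the set of integral
vectors in the linear hull of `P(G)`. -/
theorem stmt16 (G : SimpleGraph V) (hG : MatchingCovered G) (hBvN : BvN G) :
    (Submodule.span ℤ (indVec '' {M | IsPM G M}) : Set (Sym2 V → ℝ)) =
      {x | x ∈ Submodule.span ℝ (pmPolytope G) ∧ Integral x} :=
  stmt16_general G hBvN

end PaperPM
end
end

section
/- Let G be a matching-covered graph, C a separating cut with cut-contractions G₁, G₂, and let B₁, B₂ be sets of incidence vectors of perfect matchings of G₁, G₂ forming bases of lin(P(G₁)) and lin(P(G₂)) respectively. Then the merger B₁ ⊙ B₂ (composing, for each edge e ∈ C, one fixed matching of B₁ through e with all matchings of B₂ through e, and all remaining matchings of B₁ through e with one fixed matching of B₂ through e) has size |B₁| + |B₂| − |C|, consists of incidence vectors of perfect matchings of G meeting C exactly once, and is a basis of lin(P(G;C)). Moreover, if B₁, B₂ are integral bases of their spans, then so is B₁ ⊙ B₂; and if B₁, B₂ are lattice bases of L(G₁), L(G₂), then B₁ ⊙ B₂ is a lattice basis of the lattice generated by P(G;C) ∩ {0,1}^E. -/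
/-!
A perfect matching `M` of `G` meeting `C = δ(X)` only in `e` is the union of the perfect matchings
`M₁ = M ∖ E(X̄)` of `G₁ = G/X̄` and `M₂ = M ∖ E(X)` of `G₂ = G/X`, which share exactly `e`; so
`χ^M = χ^M₁ + χ^M₂ - χ^e`, and conversely any two such matchings through a common cut edge
compose to a perfect matching of `G`.

For `A ∈ B₁` through `e` we have `χ^A - χ^(m₁ e) = χ^(A ∪ m₂ e) - χ^(m₁ e ∪ m₂ e)`, and
symmetrically for `B₂`. Hence a vector `z` whose two sides lie in the spans of `B₁` and `B₂` is,
modulo the span of the merger, equal to `∑ f ∈ C, z f • χ^(m₁ f ∪ m₂ f)`. This works over `ℝ` and,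
when the cut coordinates `z f` are integers, over `ℤ`, which gives the spanning, integrality and
lattice statements. Since every perfect matching meets the odd cut `C`, `x(C) ≥ 1` on `P(G)`, so
`P(G;C)` is the convex hull of the matchings meeting `C` once.

Independence is triangular: projecting a vanishing combination onto `G₁`, the coefficient of each
`A ∪ m₂ e` with `A ≠ m₁ e` is alone in its fibre, hence zero; projecting onto `G₂` then isolates
the coefficients of the `m₁ e ∪ N`. Counting the members of `B₁` and `B₂` through each `e ∈ C`
gives `|B₁| + |B₂| - |C|`.
-/

open Classical Finset

noncomputable section

namespace PaperPM

variable {V : Type} [Fintype V] [DecidableEq V]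

/-- the merger `B₁ ⊙ B₂` of two families of matchings along the cut `C`: for each
`e ∈ C`, the fixed matching `m₁ e ∈ B₁` through `e` is composed with every matching
of `B₂` through `e`, and every other matching of `B₁` through `e` is composed with
the fixed matching `m₂ e ∈ B₂`. -/
def merger (B₁ B₂ : Finset (Finset (Sym2 V))) (m₁ m₂ : Sym2 V → Finset (Sym2 V))
    (C : Finset (Sym2 V)) : Finset (Finset (Sym2 V)) :=
  C.biUnion fun e =>
    ((B₂.filter fun N => e ∈ N).image fun N => m₁ e ∪ N) ∪
      ((B₁.filter fun N => e ∈ N ∧ N ≠ m₁ e).image fun N => N ∪ m₂ e)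

lemma mem_convexHull_sep_eq_of_le {E : Type*} [AddCommGroup E] [Module ℝ E] {s : Set E}
    {φ : E →ₗ[ℝ] ℝ} {c : ℝ} {x : E} (hx : x ∈ convexHull ℝ s) (hs : ∀ y ∈ s, c ≤ φ y)
    (hφx : φ x = c) : x ∈ convexHull ℝ {y ∈ s | φ y = c} := by
  rw [_root_.convexHull_eq] at hx
  obtain ⟨ι, t, w, z, hw₀, hw₁, hz, rfl⟩ := hx
  have hslack : ∑ i ∈ t, w i * (φ (z i) - c) = 0 := by
    rw [Finset.centerMass_eq_of_sum_1 _ _ hw₁, map_sum] at hφx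
    simp only [map_smul, smul_eq_mul] at hφx
    simp only [mul_sub, Finset.sum_sub_distrib, ← Finset.sum_mul, hw₁, hφx, one_mul, sub_self]
  have hface : ∀ i ∈ t, w i ≠ 0 → φ (z i) = c := by
    intro i hi hwi
    have hterm := (Finset.sum_eq_zero_iff_of_nonneg fun j hj =>
      mul_nonneg (hw₀ j hj) (sub_nonneg.2 (hs _ (hz j hj)))).1 hslack i hi
    exact sub_eq_zero.1 ((mul_eq_zero.1 hterm).resolve_left hwi)
  rw [← Finset.centerMass_filter_ne_zero]
  refine Finset.centerMass_mem_convexHull _ (fun i hi => hw₀ i (Finset.mem_filter.1 hi).1)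
    (by rw [Finset.sum_filter_ne_zero, hw₁]; exact one_pos) fun i hi => ?_
  obtain ⟨hi, hwi⟩ := Finset.mem_filter.1 hi
  exact ⟨hz i hi, hface i hi hwi⟩

lemma sum_fiber_eq_zero_of_linearIndepOn {ι κ E F : Type*} [DecidableEq κ] [AddCommGroup E]
    [Module ℝ E] [AddCommGroup F] [Module ℝ F] {S : Finset ι} {B : Finset κ} {v : ι → E}
    {w : κ → F} (π : E →ₗ[ℝ] F) (p : ι → κ) (hp : ∀ i ∈ S, p i ∈ B)
    (hπ : ∀ i ∈ S, π (v i) = w (p i)) (hw : LinearIndepOn ℝ w (B : Set κ)) {γ : ι → ℝ}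
    (hγ : ∑ i ∈ S, γ i • v i = 0) : ∀ k ∈ B, ∑ i ∈ S with p i = k, γ i = 0 := by
  refine linearIndepOn_finset_iff.1 hw _ ?_
  calc ∑ k ∈ B, (∑ i ∈ S with p i = k, γ i) • w k
      = ∑ k ∈ B, ∑ i ∈ S with p i = k, γ i • w (p i) := by
        refine Finset.sum_congr rfl fun k _ => ?_
        rw [Finset.sum_smul]
        exact Finset.sum_congr rfl fun i hi => by rw [(Finset.mem_filter.1 hi).2]
    _ = π (∑ i ∈ S, γ i • v i) := by
        rw [Finset.sum_fiberwise_of_maps_to hp, map_sum]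
        exact Finset.sum_congr rfl fun i hi => by rw [map_smul, hπ i hi]
    _ = 0 := by rw [hγ, map_zero]

lemma eq_zero_of_sum_fiber_eq_zero {ι κ₁ κ₂ A : Type*} [DecidableEq κ₁] [DecidableEq κ₂]
    [AddCommMonoid A] {S : Finset ι} {p₁ : ι → κ₁} {p₂ : ι → κ₂} (t : ι → Prop)
    (h₁ : ∀ i ∈ S, ∀ j ∈ S, ¬ t i → p₁ j = p₁ i → j = i)
    (h₂ : ∀ i ∈ S, ∀ j ∈ S, t i → t j → p₂ j = p₂ i → j = i) {γ : ι → A}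
    (hγ₁ : ∀ i ∈ S, ∑ j ∈ S with p₁ j = p₁ i, γ j = 0)
    (hγ₂ : ∀ i ∈ S, ∑ j ∈ S with p₂ j = p₂ i, γ j = 0) : ∀ i ∈ S, γ i = 0 := by
  have hnot : ∀ i ∈ S, ¬ t i → γ i = 0 := fun i hi hti => by
    rw [← hγ₁ i hi, Finset.sum_eq_single_of_mem (s := {j ∈ S | p₁ j = p₁ i}) i
      (Finset.mem_filter.2 ⟨hi, rfl⟩) fun j hj hji =>
        absurd (h₁ i hi j (Finset.mem_filter.1 hj).1 hti (Finset.mem_filter.1 hj).2) hji]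
  intro i hi
  by_cases hti : t i
  · rw [← hγ₂ i hi, Finset.sum_eq_single_of_mem (s := {j ∈ S | p₂ j = p₂ i}) i
      (Finset.mem_filter.2 ⟨hi, rfl⟩) fun j hj hji => ?_]
    obtain ⟨hj, hpj⟩ := Finset.mem_filter.1 hj
    by_cases htj : t j
    · exact absurd (h₂ i hi j hj hti htj hpj) hji
    · exact hnot j hj htj
  · exact hnot i hi hti

lemma sum_card_filter_mem {α : Type*} [DecidableEq α] {C : Finset α} {B : Finset (Finset α)}
    (hB : ∀ A ∈ B, #(A ∩ C) = 1) : ∑ e ∈ C, #{A ∈ B | e ∈ A} = #B := by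
  simp only [Finset.card_filter]
  rw [Finset.sum_comm, Finset.card_eq_sum_ones]
  refine Finset.sum_congr rfl fun A hA => ?_
  rw [← Finset.card_filter, Finset.filter_mem_eq_inter, Finset.inter_comm, hB A hA]

lemma eq_of_mem_of_inter_eq_singleton {α : Type*} [DecidableEq α] {M C : Finset α} {e f : α}
    (h : M ∩ C = {e}) (hfM : f ∈ M) (hfC : f ∈ C) : f = e :=
  Finset.mem_singleton.1 (h ▸ Finset.mem_inter.2 ⟨hfM, hfC⟩)

omit [Fintype V] in
lemma indVec_union_add_indVec_inter (M N : Finset (Sym2 V)) :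
    indVec (M ∪ N) + indVec (M ∩ N) = indVec M + indVec N := by
  ext f
  by_cases hM : f ∈ M <;> by_cases hN : f ∈ N <;> simp [indVec, hM, hN]

omit [Fintype V] in
lemma edgeSum_indVec (M A : Finset (Sym2 V)) : edgeSum (indVec M) A = #(M ∩ A) := by
  simp only [edgeSum, indVec, Finset.sum_boole, Finset.filter_mem_eq_inter, Finset.inter_comm]

omit [Fintype V] in
lemma sum_indVec_smul_eq {E : Type*} [AddCommGroup E] [Module ℝ E] {M C : Finset (Sym2 V)}
    {e : Sym2 V} (hMC : M ∩ C = {e}) (g : Sym2 V → E) : ∑ f ∈ C, indVec M f • g f = g e := by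
  have he : e ∈ M ∩ C := hMC ▸ Finset.mem_singleton_self e
  rw [Finset.sum_eq_single_of_mem e (Finset.mem_inter.1 he).2]
  · simp [indVec, (Finset.mem_inter.1 he).1]
  · intro f hf hfe
    have hfM : f ∉ M := fun hfM => hfe (eq_of_mem_of_inter_eq_singleton hMC hfM hf)
    simp [indVec, hfM]

omit [Fintype V] in
lemma sub_sum_smul_indVec_mem_of_mem_span {R : Type*} [Semiring R] [Module R ℝ]
    [IsScalarTower R ℝ ℝ] {B : Finset (Finset (Sym2 V))} {C : Finset (Sym2 V)}
    {m : Sym2 V → Finset (Sym2 V)} {W : Submodule R (Sym2 V → ℝ)}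
    (hBC : ∀ A ∈ B, #(A ∩ C) = 1) (hB : ∀ A ∈ B, ∀ e ∈ A ∩ C, indVec A - indVec (m e) ∈ W)
    {x : Sym2 V → ℝ} (hx : x ∈ Submodule.span R (indVec '' (B : Set (Finset (Sym2 V))))) :
    x - ∑ f ∈ C, x f • indVec (m f) ∈ W := by
  let L : (Sym2 V → ℝ) →ₗ[ℝ] (Sym2 V → ℝ) :=
    LinearMap.id - ∑ f ∈ C, (LinearMap.proj f).smulRight (indVec (m f))
  have hL : ∀ y, L y = y - ∑ f ∈ C, y f • indVec (m f) := fun y => by simp [L]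
  suffices Submodule.span R (indVec '' (B : Set (Finset (Sym2 V)))) ≤
      W.comap (L.restrictScalars R) by
    have hLx := this hx
    rwa [Submodule.mem_comap, LinearMap.restrictScalars_apply, hL] at hLx
  rw [Submodule.span_le]
  rintro _ ⟨A, hA, rfl⟩
  obtain ⟨e, hAC⟩ := Finset.card_eq_one.1 (hBC A hA)
  show L (indVec A) ∈ W
  rw [hL, sum_indVec_smul_eq hAC]
  exact hB A hA e (hAC ▸ Finset.mem_singleton_self e)

omit [Fintype V] in
lemma apply_eq_zero_of_mem_span_s18 {G : SimpleGraph V} {S : Set (Finset (Sym2 V))}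
    (hS : ∀ M ∈ S, (M : Set (Sym2 V)) ⊆ G.edgeSet) {z : Sym2 V → ℝ}
    (hz : z ∈ Submodule.span ℝ (indVec '' S)) {f : Sym2 V} (hf : f ∉ G.edgeSet) : z f = 0 := by
  suffices Submodule.span ℝ (indVec '' S) ≤ LinearMap.ker (LinearMap.proj f) from this hz
  rw [Submodule.span_le]
  rintro _ ⟨M, hM, rfl⟩
  have hfM : f ∉ M := fun hfM => hf (hS M hM hfM)
  simp [indVec, hfM]

lemma mem_cutE {G : SimpleGraph V} {X : Set V} {e : Sym2 V} :
    e ∈ cutE G X ↔ e ∈ G.edgeSet ∧ ∃ u v : V, e = s(u, v) ∧ u ∈ X ∧ v ∉ X := by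
  simp [cutE]

lemma cutE_compl (G : SimpleGraph V) (X : Set V) : cutE G Xᶜ = cutE G X := by
  ext e
  simp only [mem_cutE, Set.mem_compl_iff, not_not]
  constructor <;>
  · rintro ⟨he, u, v, rfl, hu, hv⟩
    exact ⟨he, v, u, Sym2.eq_swap, hv, hu⟩

lemma not_forall_mem_of_mem_cutE {G : SimpleGraph V} {X : Set V} {e : Sym2 V}
    (he : e ∈ cutE G X) : ¬ ∀ v ∈ e, v ∈ X := by
  obtain ⟨-, u, v, rfl, -, hv⟩ := mem_cutE.1 he
  exact fun h => hv (h v (Sym2.mem_mk_right u v))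

omit [Fintype V] [DecidableEq V] in
lemma not_forall_mem_compl {X : Set V} {f : Sym2 V} (h : ∀ v ∈ f, v ∈ X) :
    ¬ ∀ v ∈ f, v ∈ Xᶜ :=
  fun hc => hc _ (Sym2.out_fst_mem f) (h _ (Sym2.out_fst_mem f))

lemma mem_cutE_of_not_forall {G : SimpleGraph V} {X : Set V} {e : Sym2 V} (he : e ∈ G.edgeSet)
    (hX : ¬ ∀ v ∈ e, v ∈ X) (hXc : ¬ ∀ v ∈ e, v ∈ Xᶜ) : e ∈ cutE G X := by
  obtain ⟨v, hve, hv⟩ := not_forall₂.1 hX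
  obtain ⟨u, hue, hu⟩ := not_forall₂.1 hXc
  rw [Set.notMem_compl_iff] at hu
  exact mem_cutE.2 ⟨he, u, v, (Sym2.mem_and_mem_iff (ne_of_mem_of_not_mem hu hv)).1 ⟨hue, hve⟩,
    hu, hv⟩

lemma IsPM.inter_cutE_nonempty {G : SimpleGraph V} {M : Finset (Sym2 V)} (hM : IsPM G M)
    {X : Set V} (hX : Odd #X.toFinset) : (M ∩ cutE G X).Nonempty := by
  by_contra hempty
  rw [Finset.not_nonempty_iff_eq_empty] at hempty
  choose φ hφ huniq using hM.2
  have hinside : ∀ v ∈ X, ∀ w ∈ φ v, w ∈ X := fun v hv => by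
    by_contra hout
    have hcut := mem_cutE_of_not_forall (hM.1 (hφ v).1) hout fun h => h v (hφ v).2 hv
    exact Finset.notMem_empty _ (hempty ▸ Finset.mem_inter.2 ⟨(hφ v).1, hcut⟩)
  have hpair : ∀ f ∈ M, (∀ w ∈ f, w ∈ X) → #{v ∈ X.toFinset | φ v = f} = 2 := by
    intro f
    induction f using Sym2.ind with
    | h a b =>
      intro hf hfX
      have hab : a ≠ b := G.ne_of_adj (hM.1 hf)
      have hfibre : {v ∈ X.toFinset | φ v = s(a, b)} = {a, b} := by
        ext v
        simp only [Finset.mem_filter, Set.mem_toFinset, Finset.mem_insert, Finset.mem_singleton]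
        refine ⟨fun ⟨_, hv⟩ => Sym2.mem_iff.1 (hv ▸ (hφ v).2), ?_⟩
        rintro (rfl | rfl)
        · exact ⟨hfX _ (Sym2.mem_mk_left _ _), (huniq _ _ ⟨hf, Sym2.mem_mk_left _ _⟩).symm⟩
        · exact ⟨hfX _ (Sym2.mem_mk_right _ _), (huniq _ _ ⟨hf, Sym2.mem_mk_right _ _⟩).symm⟩
      rw [hfibre, Finset.card_pair_eq_two_iff.2 hab]
  have hcount := Finset.card_eq_sum_card_fiberwise (t := X.toFinset.image φ)
    fun v hv => Finset.mem_image_of_mem φ hv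
  rw [Finset.sum_congr rfl (g := fun _ => 2) fun f hf => by
    obtain ⟨v, hv, rfl⟩ := Finset.mem_image.1 hf
    convert hpair _ (hφ v).1 (hinside v (Set.mem_toFinset.1 hv)), Finset.sum_const,
    smul_eq_mul] at hcount
  exact Nat.not_even_iff_odd.2 hX ⟨_, hcount.trans (Nat.mul_two _)⟩

lemma span_faceCut {G : SimpleGraph V} {X : Set V} (hX : Odd #X.toFinset) :
    Submodule.span ℝ (faceCut G X) =
      Submodule.span ℝ {x | ∃ M, IsPM G M ∧ #(M ∩ cutE G X) = 1 ∧ x = indVec M} := by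
  let φ : (Sym2 V → ℝ) →ₗ[ℝ] ℝ := ∑ e ∈ cutE G X, LinearMap.proj e
  have hφ : ∀ x, φ x = edgeSum x (cutE G X) := fun x => by simp [φ, edgeSum]
  refine le_antisymm (Submodule.span_le.2 fun x ⟨hxP, hx⟩ => ?_) (Submodule.span_mono ?_)
  · have hface := mem_convexHull_sep_eq_of_le (φ := φ) (c := 1) hxP
      (fun _ ⟨M, hM, hy⟩ => by
        rw [hy, hφ, edgeSum_indVec, Nat.one_le_cast]
        exact Finset.card_pos.2 (hM.inter_cutE_nonempty hX))
      (by rw [hφ, hx])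
    refine convexHull_min ?_ (Submodule.span ℝ _).convex hface
    rintro _ ⟨⟨M, hM, rfl⟩, hM1⟩
    rw [hφ, edgeSum_indVec, Nat.cast_eq_one] at hM1
    exact Submodule.subset_span ⟨M, hM, hM1, rfl⟩
  · rintro _ ⟨M, hM, hM1, rfl⟩
    refine ⟨subset_convexHull ℝ _ ⟨M, hM, rfl⟩, ?_⟩
    rw [edgeSum_indVec, hM1, Nat.cast_one]

/-- The edges of `M` that survive in the contraction `G/Y`. -/
def contrPart (Y : Set V) (M : Finset (Sym2 V)) : Finset (Sym2 V) :=
  M.filter fun f => ¬ ∀ v ∈ f, v ∈ Y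

def contrProj (Y : Set V) : (Sym2 V → ℝ) →ₗ[ℝ] (Sym2 V → ℝ) :=
  LinearMap.pi fun f => if ∀ v ∈ f, v ∈ Y then 0 else LinearMap.proj f

lemma contrProj_apply (Y : Set V) (z : Sym2 V → ℝ) (f : Sym2 V) :
    contrProj Y z f = if ∀ v ∈ f, v ∈ Y then 0 else z f := by
  simp only [contrProj, LinearMap.pi_apply]
  split_ifs <;> rfl

lemma contrProj_indVec (Y : Set V) (M : Finset (Sym2 V)) :
    contrProj Y (indVec M) = indVec (contrPart Y M) := by
  ext f
  rw [contrProj_apply]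
  by_cases hf : ∀ v ∈ f, v ∈ Y
  · have hfM : f ∉ contrPart Y M := fun h => (Finset.mem_filter.1 h).2 hf
    simp only [if_pos hf, indVec, hfM, if_false]
  · rw [if_neg hf]
    simp only [indVec, contrPart, Finset.mem_filter, hf, not_false_eq_true, and_true]

lemma contrPart_union (Y : Set V) (M N : Finset (Sym2 V)) :
    contrPart Y (M ∪ N) = contrPart Y M ∪ contrPart Y N :=
  Finset.filter_union _ _ _

/-- Away from the cut, every edge of `G` lies in exactly one of the two contractions; the cut
edges lie in both. -/
lemma contrProj_compl_add_contrProj {G : SimpleGraph V} (X : Set V) {z : Sym2 V → ℝ}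
    (hz : ∀ f ∉ G.edgeSet, z f = 0) :
    contrProj Xᶜ z + contrProj X z = z + ∑ f ∈ cutE G X, z f • indVec {f} := by
  ext g
  have hcut : (∑ f ∈ cutE G X, z f • indVec {f}) g = if g ∈ cutE G X then z g else 0 := by
    simp [Finset.sum_apply, indVec]
  rw [Pi.add_apply, Pi.add_apply, contrProj_apply, contrProj_apply, hcut]
  by_cases hgX : ∀ v ∈ g, v ∈ X
  · rw [if_neg (not_forall_mem_compl hgX), if_pos hgX,
      if_neg fun h => not_forall_mem_of_mem_cutE h hgX]
  by_cases hgXc : ∀ v ∈ g, v ∈ Xᶜ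
  · rw [if_pos hgXc, if_neg hgX,
      if_neg fun h => not_forall_mem_of_mem_cutE (by rwa [cutE_compl]) hgXc, zero_add, add_zero]
  rw [if_neg hgXc, if_neg hgX]
  by_cases hg : g ∈ G.edgeSet
  · rw [if_pos (mem_cutE_of_not_forall hg hgX hgXc)]
  · rw [if_neg fun h => hg (mem_cutE.1 h).1, hz g hg]

lemma contrProj_mem_span {Y : Set V} {S B : Set (Finset (Sym2 V))}
    (hSB : ∀ M ∈ S, contrPart Y M ∈ B) {z : Sym2 V → ℝ}
    (hz : z ∈ Submodule.span ℝ (indVec '' S)) : contrProj Y z ∈ Submodule.span ℝ (indVec '' B) := by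
  suffices Submodule.span ℝ (indVec '' S) ≤ (Submodule.span ℝ (indVec '' B)).comap (contrProj Y)
    from this hz
  rw [Submodule.span_le]
  rintro _ ⟨M, hM, rfl⟩
  exact Submodule.subset_span ⟨_, hSB M hM, (contrProj_indVec Y M).symm⟩

lemma Integral.contrProj {z : Sym2 V → ℝ} (hz : Integral z) (Y : Set V) :
    Integral (contrProj Y z) := fun f => by
  rw [contrProj_apply]
  split_ifs
  exacts [⟨0, Int.cast_zero.symm⟩, hz f]

namespace IsPMContr

variable {G : SimpleGraph V} {Y : Set V} {M : Finset (Sym2 V)}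

lemma mem_cutE_of_mem (h : IsPMContr G Y M) {f : Sym2 V} {v : V} (hf : f ∈ M) (hvf : v ∈ f)
    (hv : v ∈ Y) : f ∈ cutE G Y :=
  mem_cutE_of_not_forall (h.1 hf) (h.2.1 f hf) fun hY => hY v hvf hv

lemma inter_cutE_eq (h : IsPMContr G Y M) {e : Sym2 V} (he : e ∈ M) (heC : e ∈ cutE G Y) :
    M ∩ cutE G Y = {e} := by
  obtain ⟨a, ha⟩ := Finset.card_eq_one.1 h.2.2.1
  rwa [eq_of_mem_of_inter_eq_singleton ha he heC]

lemma inter_cutE_compl_eq {X : Set V} (h : IsPMContr G Xᶜ M) {e : Sym2 V} (he : e ∈ M)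
    (heC : e ∈ cutE G X) : M ∩ cutE G X = {e} := by
  simpa only [cutE_compl] using h.inter_cutE_eq he (by rwa [cutE_compl])

lemma contrPart_self (h : IsPMContr G Y M) : contrPart Y M = M :=
  Finset.filter_true_of_mem h.2.1

lemma contrPart_compl (h : IsPMContr G Y M) : contrPart Yᶜ M = M ∩ cutE G Y := by
  ext f
  simp only [contrPart, Finset.mem_filter, Finset.mem_inter]
  refine ⟨fun ⟨hf, hfY⟩ => ⟨hf, mem_cutE_of_not_forall (h.1 hf) (h.2.1 f hf) hfY⟩,
    fun ⟨hf, hfC⟩ => ⟨hf, not_forall_mem_of_mem_cutE ((cutE_compl G Y).symm ▸ hfC)⟩⟩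

end IsPMContr

lemma contrPart_isPMContr {G : SimpleGraph V} {Y : Set V} {M : Finset (Sym2 V)} (hM : IsPM G M)
    (hMC : #(M ∩ cutE G Y) = 1) : IsPMContr G Y (contrPart Y M) := by
  have hcut : contrPart Y M ∩ cutE G Y = M ∩ cutE G Y := by
    ext f
    simp only [contrPart, Finset.mem_inter, Finset.mem_filter]
    exact ⟨fun h => ⟨h.1.1, h.2⟩, fun h => ⟨⟨h.1, not_forall_mem_of_mem_cutE h.2⟩, h.2⟩⟩
  refine ⟨fun f hf => hM.1 (Finset.filter_subset _ _ hf), fun f hf => (Finset.mem_filter.1 hf).2,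
    hcut ▸ hMC, fun v hv => ?_⟩
  obtain ⟨f, ⟨hf, hvf⟩, huniq⟩ := hM.2 v
  exact ⟨f, ⟨Finset.mem_filter.2 ⟨hf, fun hY => hv (hY v hvf)⟩, hvf⟩,
    fun g ⟨hg, hvg⟩ => huniq g ⟨(Finset.mem_filter.1 hg).1, hvg⟩⟩

section Compose

variable {G : SimpleGraph V} {X : Set V} {A N : Finset (Sym2 V)} {e : Sym2 V}

omit [Fintype V] in
lemma existsUnique_mem_union_of_subset {v : V} (hA : ∃! f, f ∈ A ∧ v ∈ f)
    (hN : ∀ f ∈ N, v ∈ f → f ∈ A) : ∃! f, f ∈ A ∪ N ∧ v ∈ f := by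
  obtain ⟨f, hf, huniq⟩ := hA
  refine ⟨f, ⟨Finset.mem_union_left _ hf.1, hf.2⟩, fun g ⟨hg, hvg⟩ => huniq g ⟨?_, hvg⟩⟩
  exact (Finset.mem_union.1 hg).elim id fun hg => hN g hg hvg

variable (h₁ : IsPMContr G Xᶜ A) (h₂ : IsPMContr G X N) (he : e ∈ cutE G X) (heA : e ∈ A)
  (heN : e ∈ N)

include h₁ h₂ he heA heN

lemma isPM_union : IsPM G (A ∪ N) := by
  refine ⟨by simpa only [Finset.coe_union, Set.union_subset_iff] using ⟨h₁.1, h₂.1⟩, fun v => ?_⟩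
  by_cases hv : v ∈ X
  · refine existsUnique_mem_union_of_subset (h₁.2.2.2 v (by simpa using hv)) fun f hf hvf => ?_
    rw [eq_of_mem_of_inter_eq_singleton (h₂.inter_cutE_eq heN he) hf (h₂.mem_cutE_of_mem hf hvf hv)]
    exact heA
  · rw [Finset.union_comm]
    refine existsUnique_mem_union_of_subset (h₂.2.2.2 v hv) fun f hf hvf => ?_
    rw [eq_of_mem_of_inter_eq_singleton (h₁.inter_cutE_compl_eq heA he) hf
      (cutE_compl G X ▸ h₁.mem_cutE_of_mem hf hvf hv)]
    exact heN

lemma union_inter_cutE_eq : (A ∪ N) ∩ cutE G X = {e} := by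
  rw [Finset.union_inter_distrib_right, h₁.inter_cutE_compl_eq heA he, h₂.inter_cutE_eq heN he,
    Finset.union_self]

lemma contrPart_compl_union_eq : contrPart Xᶜ (A ∪ N) = A := by
  rw [contrPart_union, h₁.contrPart_self, h₂.contrPart_compl, h₂.inter_cutE_eq heN he,
    Finset.union_eq_left, Finset.singleton_subset_iff]
  exact heA

lemma contrPart_union_eq : contrPart X (A ∪ N) = N := by
  have h₁' : contrPart X A = A ∩ cutE G X := by
    simpa only [compl_compl, cutE_compl] using h₁.contrPart_compl
  rw [contrPart_union, h₂.contrPart_self, h₁', h₁.inter_cutE_compl_eq heA he,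
    Finset.union_eq_right, Finset.singleton_subset_iff]
  exact heN

lemma indVec_union_eq : indVec (A ∪ N) = indVec A + indVec N - indVec {e} := by
  have hAN : A ∩ N = {e} := by
    refine Finset.eq_singleton_iff_unique_mem.2 ⟨Finset.mem_inter.2 ⟨heA, heN⟩, fun f hf => ?_⟩
    obtain ⟨hfA, hfN⟩ := Finset.mem_inter.1 hf
    have hfC := mem_cutE_of_not_forall (h₂.1 hfN) (h₂.2.1 f hfN) (h₁.2.1 f hfA)
    exact eq_of_mem_of_inter_eq_singleton (h₁.inter_cutE_compl_eq heA he) hfA hfC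
  rw [← indVec_union_add_indVec_inter, hAN, add_sub_cancel_right]

end Compose

structure Mergeable (G : SimpleGraph V) (X : Set V) (B₁ B₂ : Finset (Finset (Sym2 V)))
    (m₁ m₂ : Sym2 V → Finset (Sym2 V)) : Prop where
  isPMContr₁ : ∀ M ∈ B₁, IsPMContr G Xᶜ M
  isPMContr₂ : ∀ M ∈ B₂, IsPMContr G X M
  fixed₁ : ∀ e ∈ cutE G X, m₁ e ∈ B₁ ∧ e ∈ m₁ e
  fixed₂ : ∀ e ∈ cutE G X, m₂ e ∈ B₂ ∧ e ∈ m₂ e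

def mergerAt (B₁ B₂ : Finset (Finset (Sym2 V))) (m₁ m₂ : Sym2 V → Finset (Sym2 V)) (e : Sym2 V) :
    Finset (Finset (Sym2 V)) :=
  ((B₂.filter fun N => e ∈ N).image fun N => m₁ e ∪ N) ∪
    ((B₁.filter fun N => e ∈ N ∧ N ≠ m₁ e).image fun N => N ∪ m₂ e)

omit [Fintype V] in
lemma merger_eq_biUnion (B₁ B₂ : Finset (Finset (Sym2 V))) (m₁ m₂ : Sym2 V → Finset (Sym2 V))
    (C : Finset (Sym2 V)) : merger B₁ B₂ m₁ m₂ C = C.biUnion (mergerAt B₁ B₂ m₁ m₂) :=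
  rfl

namespace Mergeable

variable {G : SimpleGraph V} {X : Set V} {B₁ B₂ : Finset (Finset (Sym2 V))}
  {m₁ m₂ : Sym2 V → Finset (Sym2 V)} (h : Mergeable G X B₁ B₂ m₁ m₂) {R : Type*} [Ring R]
  [Module R ℝ]

include h

lemma mem_mergerAt_iff {e : Sym2 V} (he : e ∈ cutE G X) {M : Finset (Sym2 V)} :
    M ∈ mergerAt B₁ B₂ m₁ m₂ e ↔ ∃ A ∈ B₁, ∃ N ∈ B₂,
      e ∈ A ∧ e ∈ N ∧ (A = m₁ e ∨ N = m₂ e) ∧ A ∪ N = M := by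
  simp only [mergerAt, Finset.mem_union, Finset.mem_image, Finset.mem_filter]
  constructor
  · rintro (⟨N, ⟨hN, heN⟩, rfl⟩ | ⟨A, ⟨hA, heA, -⟩, rfl⟩)
    · exact ⟨_, (h.fixed₁ e he).1, N, hN, (h.fixed₁ e he).2, heN, Or.inl rfl, rfl⟩
    · exact ⟨A, hA, _, (h.fixed₂ e he).1, heA, (h.fixed₂ e he).2, Or.inr rfl, rfl⟩
  · rintro ⟨A, hA, N, hN, heA, heN, hAN, rfl⟩
    by_cases hAe : A = m₁ e
    · subst hAe
      exact Or.inl ⟨N, ⟨hN, heN⟩, rfl⟩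
    · obtain rfl := hAN.resolve_left hAe
      exact Or.inr ⟨A, ⟨hA, heA, hAe⟩, rfl⟩

lemma mem_merger_iff {M : Finset (Sym2 V)} :
    M ∈ merger B₁ B₂ m₁ m₂ (cutE G X) ↔ ∃ e ∈ cutE G X, ∃ A ∈ B₁, ∃ N ∈ B₂,
      e ∈ A ∧ e ∈ N ∧ (A = m₁ e ∨ N = m₂ e) ∧ A ∪ N = M := by
  rw [merger_eq_biUnion, Finset.mem_biUnion]
  constructor
  · rintro ⟨e, he, hM⟩
    exact ⟨e, he, (h.mem_mergerAt_iff he).1 hM⟩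
  · rintro ⟨e, he, hM⟩
    exact ⟨e, he, (h.mem_mergerAt_iff he).2 hM⟩

lemma card_inter_cutE₁ {A : Finset (Sym2 V)} (hA : A ∈ B₁) : #(A ∩ cutE G X) = 1 := by
  rw [← cutE_compl]
  exact (h.isPMContr₁ A hA).2.2.1

lemma card_inter_cutE₂ {N : Finset (Sym2 V)} (hN : N ∈ B₂) : #(N ∩ cutE G X) = 1 :=
  (h.isPMContr₂ N hN).2.2.1

lemma card_mergerAt_add_one {e : Sym2 V} (he : e ∈ cutE G X) :
    #(mergerAt B₁ B₂ m₁ m₂ e) + 1 = #{N ∈ B₂ | e ∈ N} + #{A ∈ B₁ | e ∈ A} := by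
  have hm₁ := h.isPMContr₁ _ (h.fixed₁ e he).1
  have hm₂ := h.isPMContr₂ _ (h.fixed₂ e he).1
  have hinj₂ : Set.InjOn (fun N => m₁ e ∪ N) (B₂.filter (e ∈ ·)) := fun N hN N' hN' hNN' => by
    obtain ⟨hN, heN⟩ := Finset.mem_filter.1 hN
    obtain ⟨hN', heN'⟩ := Finset.mem_filter.1 hN'
    rw [← contrPart_union_eq hm₁ (h.isPMContr₂ N hN) he (h.fixed₁ e he).2 heN,
      ← contrPart_union_eq hm₁ (h.isPMContr₂ N' hN') he (h.fixed₁ e he).2 heN']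
    exact congrArg (contrPart X) hNN'
  have hinj₁ : Set.InjOn (fun A => A ∪ m₂ e) (B₁.filter fun A => e ∈ A ∧ A ≠ m₁ e) :=
      fun A hA A' hA' hAA' => by
    obtain ⟨hA, heA, -⟩ := Finset.mem_filter.1 hA
    obtain ⟨hA', heA', -⟩ := Finset.mem_filter.1 hA'
    rw [← contrPart_compl_union_eq (h.isPMContr₁ A hA) hm₂ he heA (h.fixed₂ e he).2,
      ← contrPart_compl_union_eq (h.isPMContr₁ A' hA') hm₂ he heA' (h.fixed₂ e he).2]
    exact congrArg (contrPart Xᶜ) hAA'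
  have hdisj : Disjoint ({N ∈ B₂ | e ∈ N}.image fun N => m₁ e ∪ N)
      ({A ∈ B₁ | e ∈ A ∧ A ≠ m₁ e}.image fun A => A ∪ m₂ e) := by
    rw [Finset.disjoint_left]
    rintro M hM hM'
    obtain ⟨N, hN, rfl⟩ := Finset.mem_image.1 hM
    obtain ⟨A, hA, hAN⟩ := Finset.mem_image.1 hM'
    obtain ⟨hN, heN⟩ := Finset.mem_filter.1 hN
    obtain ⟨hA, heA, hAe⟩ := Finset.mem_filter.1 hA
    apply hAe
    rw [← contrPart_compl_union_eq (h.isPMContr₁ A hA) hm₂ he heA (h.fixed₂ e he).2, hAN,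
      contrPart_compl_union_eq hm₁ (h.isPMContr₂ N hN) he (h.fixed₁ e he).2 heN]
  have herase : {A ∈ B₁ | e ∈ A ∧ A ≠ m₁ e} = {A ∈ B₁ | e ∈ A}.erase (m₁ e) := by
    ext A
    simp only [Finset.mem_filter, Finset.mem_erase]
    tauto
  rw [mergerAt, Finset.card_union_of_disjoint hdisj, Finset.card_image_of_injOn hinj₂,
    Finset.card_image_of_injOn hinj₁, herase, add_assoc, Finset.card_erase_add_one
      (Finset.mem_filter.2 (h.fixed₁ e he))]

lemma card_merger_add : #(merger B₁ B₂ m₁ m₂ (cutE G X)) + #(cutE G X) = #B₁ + #B₂ := by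
  have hdisj : (cutE G X : Set (Sym2 V)).PairwiseDisjoint (mergerAt B₁ B₂ m₁ m₂) := by
    intro e he e' he' hee'
    refine Finset.disjoint_left.2 fun M hM hM' => hee' ?_
    obtain ⟨A, hA, N, hN, heA, heN, -, rfl⟩ := (h.mem_mergerAt_iff he).1 hM
    obtain ⟨A', hA', N', hN', heA', heN', -, hM'⟩ := (h.mem_mergerAt_iff he').1 hM'
    have hcut := union_inter_cutE_eq (h.isPMContr₁ A hA) (h.isPMContr₂ N hN) he heA heN
    rw [← hM', union_inter_cutE_eq (h.isPMContr₁ A' hA') (h.isPMContr₂ N' hN') he' heA' heN']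
      at hcut
    exact (Finset.singleton_injective hcut).symm
  have hcount₁ : ∑ e ∈ cutE G X, #{A ∈ B₁ | e ∈ A} = #B₁ :=
    sum_card_filter_mem fun A hA => h.card_inter_cutE₁ hA
  have hcount₂ : ∑ e ∈ cutE G X, #{N ∈ B₂ | e ∈ N} = #B₂ :=
    sum_card_filter_mem fun N hN => h.card_inter_cutE₂ hN
  rw [merger_eq_biUnion, Finset.card_biUnion hdisj, Finset.card_eq_sum_ones (cutE G X),
    ← Finset.sum_add_distrib, Finset.sum_congr rfl fun e he => h.card_mergerAt_add_one he,
    Finset.sum_add_distrib, hcount₁, hcount₂, add_comm]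

lemma isPM_of_mem_merger {M : Finset (Sym2 V)} (hM : M ∈ merger B₁ B₂ m₁ m₂ (cutE G X)) :
    IsPM G M ∧ #(M ∩ cutE G X) = 1 := by
  obtain ⟨e, he, A, hA, N, hN, heA, heN, -, rfl⟩ := h.mem_merger_iff.1 hM
  have h₁ := h.isPMContr₁ A hA
  have h₂ := h.isPMContr₂ N hN
  exact ⟨isPM_union h₁ h₂ he heA heN, by rw [union_inter_cutE_eq h₁ h₂ he heA heN,
    Finset.card_singleton]⟩

lemma contrPart_compl_mem {M : Finset (Sym2 V)} (hM : M ∈ merger B₁ B₂ m₁ m₂ (cutE G X)) :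
    contrPart Xᶜ M ∈ B₁ := by
  obtain ⟨e, he, A, hA, N, hN, heA, heN, -, rfl⟩ := h.mem_merger_iff.1 hM
  rwa [contrPart_compl_union_eq (h.isPMContr₁ A hA) (h.isPMContr₂ N hN) he heA heN]

lemma contrPart_mem {M : Finset (Sym2 V)} (hM : M ∈ merger B₁ B₂ m₁ m₂ (cutE G X)) :
    contrPart X M ∈ B₂ := by
  obtain ⟨e, he, A, hA, N, hN, heA, heN, -, rfl⟩ := h.mem_merger_iff.1 hM
  rwa [contrPart_union_eq (h.isPMContr₁ A hA) (h.isPMContr₂ N hN) he heA heN]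

lemma eq_of_contrPart_compl_eq {M M' : Finset (Sym2 V)}
    (hM : M ∈ merger B₁ B₂ m₁ m₂ (cutE G X)) (hM' : M' ∈ merger B₁ B₂ m₁ m₂ (cutE G X))
    (hfree : ¬ ∃ e ∈ cutE G X, contrPart Xᶜ M = m₁ e) (hMM' : contrPart Xᶜ M' = contrPart Xᶜ M) :
    M' = M := by
  obtain ⟨e, he, A, hA, N, hN, heA, heN, hAN, rfl⟩ := h.mem_merger_iff.1 hM
  obtain ⟨e', he', A', hA', N', hN', heA', heN', hAN', rfl⟩ := h.mem_merger_iff.1 hM'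
  have h₁ := h.isPMContr₁ A hA
  rw [contrPart_compl_union_eq h₁ (h.isPMContr₂ N hN) he heA heN,
    contrPart_compl_union_eq (h.isPMContr₁ A' hA') (h.isPMContr₂ N' hN') he' heA' heN'] at hMM'
  rw [contrPart_compl_union_eq h₁ (h.isPMContr₂ N hN) he heA heN] at hfree
  subst hMM'
  obtain rfl := eq_of_mem_of_inter_eq_singleton (h₁.inter_cutE_compl_eq heA he) heA' he'
  have hAe : A' ≠ m₁ e' := fun hAe => hfree ⟨e', he', hAe⟩
  rw [hAN.resolve_left hAe, hAN'.resolve_left hAe]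

lemma eq_of_contrPart_eq {M M' : Finset (Sym2 V)}
    (hM : M ∈ merger B₁ B₂ m₁ m₂ (cutE G X)) (hM' : M' ∈ merger B₁ B₂ m₁ m₂ (cutE G X))
    (hfix : ∃ e ∈ cutE G X, contrPart Xᶜ M = m₁ e)
    (hfix' : ∃ e ∈ cutE G X, contrPart Xᶜ M' = m₁ e) (hMM' : contrPart X M' = contrPart X M) :
    M' = M := by
  have hfixed : ∀ M ∈ merger B₁ B₂ m₁ m₂ (cutE G X), (∃ e ∈ cutE G X, contrPart Xᶜ M = m₁ e) →
      ∃ e ∈ cutE G X, ∃ N ∈ B₂, e ∈ N ∧ contrPart X M = N ∧ M = m₁ e ∪ N := by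
    rintro _ hM ⟨f, hf, hAf⟩
    obtain ⟨e, he, A, hA, N, hN, heA, heN, -, rfl⟩ := h.mem_merger_iff.1 hM
    have h₁ := h.isPMContr₁ A hA
    rw [contrPart_compl_union_eq h₁ (h.isPMContr₂ N hN) he heA heN] at hAf
    obtain rfl := eq_of_mem_of_inter_eq_singleton (h₁.inter_cutE_compl_eq heA he)
      (hAf ▸ (h.fixed₁ f hf).2) hf
    exact ⟨_, he, N, hN, heN, contrPart_union_eq h₁ (h.isPMContr₂ N hN) he heA heN, by rw [hAf]⟩
  obtain ⟨e, he, N, hN, heN, hMN, rfl⟩ := hfixed M hM hfix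
  obtain ⟨e', he', N', hN', heN', hMN', rfl⟩ := hfixed M' hM' hfix'
  rw [hMN, hMN'] at hMM'
  subst hMM'
  rw [eq_of_mem_of_inter_eq_singleton ((h.isPMContr₂ N' hN).inter_cutE_eq heN he) heN' he']

lemma linearIndependent (hB₁ : LinearIndependent ℝ (fun M : B₁ => indVec M.1))
    (hB₂ : LinearIndependent ℝ (fun M : B₂ => indVec M.1)) :
    LinearIndependent ℝ (fun M : merger B₁ B₂ m₁ m₂ (cutE G X) => indVec M.1) := by
  refine linearIndepOn_finset_iff.2 fun γ hγ =>
    eq_zero_of_sum_fiber_eq_zero (fun M => ∃ e ∈ cutE G X, contrPart Xᶜ M = m₁ e)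
      (fun M hM M' hM' => h.eq_of_contrPart_compl_eq hM hM')
      (fun M hM M' hM' => h.eq_of_contrPart_eq hM hM') (fun M hM => ?_) (fun M hM => ?_)
  · exact sum_fiber_eq_zero_of_linearIndepOn (contrProj Xᶜ) (contrPart Xᶜ)
      (fun M hM => h.contrPart_compl_mem hM) (fun M _ => contrProj_indVec _ _) hB₁ hγ _
      (h.contrPart_compl_mem hM)
  · exact sum_fiber_eq_zero_of_linearIndepOn (contrProj X) (contrPart X)
      (fun M hM => h.contrPart_mem hM) (fun M _ => contrProj_indVec _ _) hB₂ hγ _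
      (h.contrPart_mem hM)

lemma indVec_union_mem_span {e : Sym2 V} (he : e ∈ cutE G X) {A N : Finset (Sym2 V)}
    (hA : A ∈ B₁) (hN : N ∈ B₂) (heA : e ∈ A) (heN : e ∈ N) (hfix : A = m₁ e ∨ N = m₂ e) :
    indVec (A ∪ N) ∈
      Submodule.span R (indVec '' (merger B₁ B₂ m₁ m₂ (cutE G X) : Set (Finset (Sym2 V)))) :=
  Submodule.subset_span (Set.mem_image_of_mem _
    (h.mem_merger_iff.2 ⟨e, he, A, hA, N, hN, heA, heN, hfix, rfl⟩))

lemma indVec_sub_indVec_fixed₁_mem {A : Finset (Sym2 V)} (hA : A ∈ B₁) {e : Sym2 V}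
    (he : e ∈ cutE G X) (heA : e ∈ A) :
    indVec A - indVec (m₁ e) ∈
      Submodule.span R (indVec '' (merger B₁ B₂ m₁ m₂ (cutE G X) : Set (Finset (Sym2 V)))) := by
  have hm₂ := h.isPMContr₂ _ (h.fixed₂ e he).1
  have hdiff : indVec A - indVec (m₁ e) = indVec (A ∪ m₂ e) - indVec (m₁ e ∪ m₂ e) := by
    rw [indVec_union_eq (h.isPMContr₁ A hA) hm₂ he heA (h.fixed₂ e he).2,
      indVec_union_eq (h.isPMContr₁ _ (h.fixed₁ e he).1) hm₂ he (h.fixed₁ e he).2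
        (h.fixed₂ e he).2]
    abel
  rw [hdiff]
  exact sub_mem (h.indVec_union_mem_span he hA (h.fixed₂ e he).1 heA (h.fixed₂ e he).2 (Or.inr rfl))
    (h.indVec_union_mem_span he (h.fixed₁ e he).1 (h.fixed₂ e he).1 (h.fixed₁ e he).2
      (h.fixed₂ e he).2 (Or.inl rfl))

lemma indVec_sub_indVec_fixed₂_mem {N : Finset (Sym2 V)} (hN : N ∈ B₂) {e : Sym2 V}
    (he : e ∈ cutE G X) (heN : e ∈ N) :
    indVec N - indVec (m₂ e) ∈
      Submodule.span R (indVec '' (merger B₁ B₂ m₁ m₂ (cutE G X) : Set (Finset (Sym2 V)))) := by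
  have hm₁ := h.isPMContr₁ _ (h.fixed₁ e he).1
  have hdiff : indVec N - indVec (m₂ e) = indVec (m₁ e ∪ N) - indVec (m₁ e ∪ m₂ e) := by
    rw [indVec_union_eq hm₁ (h.isPMContr₂ N hN) he (h.fixed₁ e he).2 heN,
      indVec_union_eq hm₁ (h.isPMContr₂ _ (h.fixed₂ e he).1) he (h.fixed₁ e he).2
        (h.fixed₂ e he).2]
    abel
  rw [hdiff]
  exact sub_mem (h.indVec_union_mem_span he (h.fixed₁ e he).1 hN (h.fixed₁ e he).2 heN (Or.inl rfl))
    (h.indVec_union_mem_span he (h.fixed₁ e he).1 (h.fixed₂ e he).1 (h.fixed₁ e he).2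
      (h.fixed₂ e he).2 (Or.inl rfl))

lemma mem_span_merger [IsScalarTower R ℝ ℝ] {z : Sym2 V → ℝ} (hz₀ : ∀ f ∉ G.edgeSet, z f = 0)
    (hzC : ∀ f ∈ cutE G X, ∃ r : R, r • (1 : ℝ) = z f)
    (hz₁ : contrProj Xᶜ z ∈ Submodule.span R (indVec '' (B₁ : Set (Finset (Sym2 V)))))
    (hz₂ : contrProj X z ∈ Submodule.span R (indVec '' (B₂ : Set (Finset (Sym2 V))))) :
    z ∈ Submodule.span R (indVec '' (merger B₁ B₂ m₁ m₂ (cutE G X) : Set (Finset (Sym2 V)))) := by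
  have hside₁ := sub_sum_smul_indVec_mem_of_mem_span (m := m₁) (fun A hA => h.card_inter_cutE₁ hA)
    (fun A hA e he => h.indVec_sub_indVec_fixed₁_mem hA (Finset.mem_inter.1 he).2
      (Finset.mem_inter.1 he).1) hz₁
  have hside₂ := sub_sum_smul_indVec_mem_of_mem_span (m := m₂) (fun N hN => h.card_inter_cutE₂ hN)
    (fun N hN e he => h.indVec_sub_indVec_fixed₂_mem hN (Finset.mem_inter.1 he).2
      (Finset.mem_inter.1 he).1) hz₂
  have hcut : ∑ f ∈ cutE G X, z f • indVec (m₁ f ∪ m₂ f) ∈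
      Submodule.span R (indVec '' (merger B₁ B₂ m₁ m₂ (cutE G X) : Set (Finset (Sym2 V)))) := by
    refine Submodule.sum_mem _ fun f hf => ?_
    obtain ⟨r, hr⟩ := hzC f hf
    rw [← hr, smul_assoc, one_smul]
    exact Submodule.smul_mem _ _ (h.indVec_union_mem_span hf (h.fixed₁ f hf).1 (h.fixed₂ f hf).1
      (h.fixed₁ f hf).2 (h.fixed₂ f hf).2 (Or.inl rfl))
  have hz₁C : ∑ f ∈ cutE G X, contrProj Xᶜ z f • indVec (m₁ f) =
      ∑ f ∈ cutE G X, z f • indVec (m₁ f) := Finset.sum_congr rfl fun f hf => by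
    rw [contrProj_apply, if_neg (not_forall_mem_of_mem_cutE (by rwa [cutE_compl]))]
  have hz₂C : ∑ f ∈ cutE G X, contrProj X z f • indVec (m₂ f) =
      ∑ f ∈ cutE G X, z f • indVec (m₂ f) := Finset.sum_congr rfl fun f hf => by
    rw [contrProj_apply, if_neg (not_forall_mem_of_mem_cutE hf)]
  have hunion : ∑ f ∈ cutE G X, z f • indVec (m₁ f ∪ m₂ f) =
      ∑ f ∈ cutE G X, z f • indVec (m₁ f) + ∑ f ∈ cutE G X, z f • indVec (m₂ f) -
        ∑ f ∈ cutE G X, z f • indVec {f} := by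
    rw [← Finset.sum_add_distrib, ← Finset.sum_sub_distrib]
    refine Finset.sum_congr rfl fun f hf => ?_
    rw [indVec_union_eq (h.isPMContr₁ _ (h.fixed₁ f hf).1) (h.isPMContr₂ _ (h.fixed₂ f hf).1) hf
      (h.fixed₁ f hf).2 (h.fixed₂ f hf).2, smul_sub, smul_add]
  rw [hz₁C] at hside₁
  rw [hz₂C] at hside₂
  rw [hunion] at hcut
  convert add_mem (add_mem hside₁ hside₂) hcut using 1
  linear_combination (norm := abel) -contrProj_compl_add_contrProj X hz₀

lemma span_merger_eq [IsScalarTower R ℝ ℝ]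
    (hB : ∀ M, IsPM G M → #(M ∩ cutE G X) = 1 →
      indVec (contrPart Xᶜ M) ∈ Submodule.span R (indVec '' (B₁ : Set (Finset (Sym2 V)))) ∧
        indVec (contrPart X M) ∈ Submodule.span R (indVec '' (B₂ : Set (Finset (Sym2 V))))) :
    Submodule.span R (indVec '' (merger B₁ B₂ m₁ m₂ (cutE G X) : Set (Finset (Sym2 V)))) =
      Submodule.span R {x | ∃ M, IsPM G M ∧ #(M ∩ cutE G X) = 1 ∧ x = indVec M} := by
  refine le_antisymm (Submodule.span_mono ?_) (Submodule.span_le.2 ?_)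
  · rintro _ ⟨M, hM, rfl⟩
    exact ⟨M, (h.isPM_of_mem_merger hM).1, (h.isPM_of_mem_merger hM).2, rfl⟩
  · rintro _ ⟨M, hM, hM1, rfl⟩
    refine h.mem_span_merger (fun f hf => ?_) (fun f _ => ?_) ?_ ?_
    · have hfM : f ∉ M := fun hfM => hf (hM.1 hfM)
      simp [indVec, hfM]
    · by_cases hfM : f ∈ M
      · exact ⟨1, by simp [indVec, hfM]⟩
      · exact ⟨0, by simp [indVec, hfM]⟩
    · rw [contrProj_indVec]
      exact (hB M hM hM1).1
    · rw [contrProj_indVec]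
      exact (hB M hM hM1).2

end Mergeable

theorem stmt18_general (G : SimpleGraph V) (X : Set V)
    (hsep : SeparatingCut G X)
    (B₁ B₂ : Finset (Finset (Sym2 V)))
    (hB₁pm : ∀ M ∈ B₁, IsPMContr G Xᶜ M) (hB₂pm : ∀ M ∈ B₂, IsPMContr G X M)
    (hB₁li : LinearIndependent ℝ (fun M : B₁ => indVec M.1))
    (hB₂li : LinearIndependent ℝ (fun M : B₂ => indVec M.1))
    (hB₁span : Submodule.span ℝ (indVec '' (B₁ : Set (Finset (Sym2 V)))) =
      Submodule.span ℝ (contrPolytope G Xᶜ))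
    (hB₂span : Submodule.span ℝ (indVec '' (B₂ : Set (Finset (Sym2 V)))) =
      Submodule.span ℝ (contrPolytope G X))
    (m₁ m₂ : Sym2 V → Finset (Sym2 V))
    (hm₁ : ∀ e ∈ cutE G X, m₁ e ∈ B₁ ∧ e ∈ m₁ e)
    (hm₂ : ∀ e ∈ cutE G X, m₂ e ∈ B₂ ∧ e ∈ m₂ e) :
    (merger B₁ B₂ m₁ m₂ (cutE G X)).card = B₁.card + B₂.card - (cutE G X).card ∧
    (∀ M ∈ merger B₁ B₂ m₁ m₂ (cutE G X), IsPM G M ∧ (M ∩ cutE G X).card = 1) ∧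
    LinearIndependent ℝ (fun M : (merger B₁ B₂ m₁ m₂ (cutE G X)) => indVec M.1) ∧
    Submodule.span ℝ
        (indVec '' ((merger B₁ B₂ m₁ m₂ (cutE G X)) : Set (Finset (Sym2 V)))) =
      Submodule.span ℝ (faceCut G X) ∧
    ((∀ z, z ∈ Submodule.span ℝ (indVec '' (B₁ : Set (Finset (Sym2 V)))) →
        Integral z → z ∈ Submodule.span ℤ (indVec '' (B₁ : Set (Finset (Sym2 V))))) →
      (∀ z, z ∈ Submodule.span ℝ (indVec '' (B₂ : Set (Finset (Sym2 V)))) →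
        Integral z → z ∈ Submodule.span ℤ (indVec '' (B₂ : Set (Finset (Sym2 V))))) →
      ∀ z, z ∈ Submodule.span ℝ
          (indVec '' ((merger B₁ B₂ m₁ m₂ (cutE G X)) : Set (Finset (Sym2 V)))) →
        Integral z →
        z ∈ Submodule.span ℤ
          (indVec '' ((merger B₁ B₂ m₁ m₂ (cutE G X)) : Set (Finset (Sym2 V))))) ∧
    (Submodule.span ℤ (indVec '' (B₁ : Set (Finset (Sym2 V)))) =
        Submodule.span ℤ {x | ∃ M, IsPMContr G Xᶜ M ∧ x = indVec M} →
      Submodule.span ℤ (indVec '' (B₂ : Set (Finset (Sym2 V)))) =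
        Submodule.span ℤ {x | ∃ M, IsPMContr G X M ∧ x = indVec M} →
      Submodule.span ℤ
          (indVec '' ((merger B₁ B₂ m₁ m₂ (cutE G X)) : Set (Finset (Sym2 V)))) =
        Submodule.span ℤ
          {x | ∃ M, IsPM G M ∧ (M ∩ cutE G X).card = 1 ∧ x = indVec M}) := by
  have h : Mergeable G X B₁ B₂ m₁ m₂ := ⟨hB₁pm, hB₂pm, hm₁, hm₂⟩
  have hparts : ∀ M, IsPM G M → #(M ∩ cutE G X) = 1 →
      IsPMContr G Xᶜ (contrPart Xᶜ M) ∧ IsPMContr G X (contrPart X M) := fun M hM hM1 =>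
    ⟨contrPart_isPMContr hM (by rwa [cutE_compl]), contrPart_isPMContr hM hM1⟩
  refine ⟨by have := h.card_merger_add; omega, fun M hM => h.isPM_of_mem_merger hM,
    h.linearIndependent hB₁li hB₂li, ?_, fun hB₁int hB₂int z hz hzint => ?_,
    fun hB₁lat hB₂lat => ?_⟩
  · rw [span_faceCut hsep.1, h.span_merger_eq fun M hM hM1 => ⟨?_, ?_⟩]
    · rw [hB₁span]
      exact Submodule.subset_span (subset_convexHull ℝ _ ⟨_, (hparts M hM hM1).1, rfl⟩)
    · rw [hB₂span]
      exact Submodule.subset_span (subset_convexHull ℝ _ ⟨_, (hparts M hM hM1).2, rfl⟩)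
  · refine h.mem_span_merger (R := ℤ)
      (fun f => apply_eq_zero_of_mem_span_s18 (fun M hM => (h.isPM_of_mem_merger hM).1.1) hz)
      (fun f _ => ?_) (hB₁int _ ?_ (hzint.contrProj _)) (hB₂int _ ?_ (hzint.contrProj _))
    · obtain ⟨n, hn⟩ := hzint f
      exact ⟨n, by rw [hn, zsmul_one]⟩
    · exact contrProj_mem_span (fun M hM => h.contrPart_compl_mem hM) hz
    · exact contrProj_mem_span (fun M hM => h.contrPart_mem hM) hz
  · refine h.span_merger_eq fun M hM hM1 => ⟨?_, ?_⟩
    · rw [hB₁lat]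
      exact Submodule.subset_span ⟨_, (hparts M hM hM1).1, rfl⟩
    · rw [hB₂lat]
      exact Submodule.subset_span ⟨_, (hparts M hM hM1).2, rfl⟩

/-- the merger of bases `B₁, B₂` of `lin P(G₁)`, `lin P(G₂)` (made of
perfect matchings of the cut-contractions `G₁ = G/X̄`, `G₂ = G/X`) has size
`|B₁| + |B₂| − |C|`, consists of perfect matchings of `G` meeting `C` once, and is
a basis of `lin P(G;C)`; it inherits integral-basis and lattice-basis properties. -/
theorem stmt18 (G : SimpleGraph V) (hG : MatchingCovered G) (X : Set V)
    (hsep : SeparatingCut G X)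
    (B₁ B₂ : Finset (Finset (Sym2 V)))
    (hB₁pm : ∀ M ∈ B₁, IsPMContr G Xᶜ M) (hB₂pm : ∀ M ∈ B₂, IsPMContr G X M)
    (hB₁li : LinearIndependent ℝ (fun M : B₁ => indVec M.1))
    (hB₂li : LinearIndependent ℝ (fun M : B₂ => indVec M.1))
    (hB₁span : Submodule.span ℝ (indVec '' (B₁ : Set (Finset (Sym2 V)))) =
      Submodule.span ℝ (contrPolytope G Xᶜ))
    (hB₂span : Submodule.span ℝ (indVec '' (B₂ : Set (Finset (Sym2 V)))) =
      Submodule.span ℝ (contrPolytope G X))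
    (m₁ m₂ : Sym2 V → Finset (Sym2 V))
    (hm₁ : ∀ e ∈ cutE G X, m₁ e ∈ B₁ ∧ e ∈ m₁ e)
    (hm₂ : ∀ e ∈ cutE G X, m₂ e ∈ B₂ ∧ e ∈ m₂ e) :
    (merger B₁ B₂ m₁ m₂ (cutE G X)).card = B₁.card + B₂.card - (cutE G X).card ∧
    (∀ M ∈ merger B₁ B₂ m₁ m₂ (cutE G X), IsPM G M ∧ (M ∩ cutE G X).card = 1) ∧
    LinearIndependent ℝ (fun M : (merger B₁ B₂ m₁ m₂ (cutE G X)) => indVec M.1) ∧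
    Submodule.span ℝ
        (indVec '' ((merger B₁ B₂ m₁ m₂ (cutE G X)) : Set (Finset (Sym2 V)))) =
      Submodule.span ℝ (faceCut G X) ∧
    ((∀ z, z ∈ Submodule.span ℝ (indVec '' (B₁ : Set (Finset (Sym2 V)))) →
        Integral z → z ∈ Submodule.span ℤ (indVec '' (B₁ : Set (Finset (Sym2 V))))) →
      (∀ z, z ∈ Submodule.span ℝ (indVec '' (B₂ : Set (Finset (Sym2 V)))) →
        Integral z → z ∈ Submodule.span ℤ (indVec '' (B₂ : Set (Finset (Sym2 V))))) →
      ∀ z, z ∈ Submodule.span ℝ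
          (indVec '' ((merger B₁ B₂ m₁ m₂ (cutE G X)) : Set (Finset (Sym2 V)))) →
        Integral z →
        z ∈ Submodule.span ℤ
          (indVec '' ((merger B₁ B₂ m₁ m₂ (cutE G X)) : Set (Finset (Sym2 V))))) ∧
    (Submodule.span ℤ (indVec '' (B₁ : Set (Finset (Sym2 V)))) =
        Submodule.span ℤ {x | ∃ M, IsPMContr G Xᶜ M ∧ x = indVec M} →
      Submodule.span ℤ (indVec '' (B₂ : Set (Finset (Sym2 V)))) =
        Submodule.span ℤ {x | ∃ M, IsPMContr G X M ∧ x = indVec M} →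
      Submodule.span ℤ
          (indVec '' ((merger B₁ B₂ m₁ m₂ (cutE G X)) : Set (Finset (Sym2 V)))) =
        Submodule.span ℤ
          {x | ∃ M, IsPM G M ∧ (M ∩ cutE G X).card = 1 ∧ x = indVec M}) :=
  stmt18_general G X hsep B₁ B₂ hB₁pm hB₂pm hB₁li hB₂li hB₁span hB₂span m₁ m₂ hm₁ hm₂

end PaperPM
end
end
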